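/- Let E be a separable Banach space, let p : ℝ₊ → E* be locally absolutely continuous, and let x ∈ W^{1,1}_loc(ℝ₊,E). Then for a.e. t ∈ ℝ₊, the function s ↦ ⟨p(s), x(s)⟩ is differentiable at t with derivative d/dt ⟨p(t),x(t)⟩ = ⟨ṗ(t), x(t)⟩ + ⟨p(t), ẋ(t)⟩, where ṗ(t) denotes the weak* derivative of p at t (which exists a.e.) and ẋ(t) the strong derivative of x. -/

import Mathlib

open Filter Topology MeasureTheory Set

variable {E : Type*} [NormedAddCommGroup E] [NormedSpace ℝ E]

/-- An arc: an element of `W^{1,1}_loc(ℝ₊,E)`, recorded together with its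
a.e. strong derivative. -/
structure Arc (E : Type*) [NormedAddCommGroup E] [NormedSpace ℝ E] where
  x : ℝ → E
  dx : ℝ → E
  locInt : ∀ T : ℝ, IntegrableOn dx (Icc 0 T) volume
  deriv_ae : ∀ᵐ t ∂(volume.restrict (Ioi (0:ℝ))), HasDerivAt x (dx t) t
  fund : ∀ t : ℝ, 0 ≤ t → x t = x 0 + ∫ s in (0:ℝ)..t, dx s

/-- The admissible trajectories `𝒜_(t,ξ)`. -/
def Admissible (Γ : ℝ → E → Set E) (t : ℝ) (ξ : E) (a : Arc E) : Prop :=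
  a.x t = ξ ∧ ∀ᵐ s ∂(volume.restrict (Ici t)), a.dx s ∈ Γ s (a.x s)

/-- The value function `V(t,ξ) = inf_{x ∈ 𝒜_(t,ξ)} ∫_t^∞ L(s,x(s),ẋ(s))ds`,
the infimum being taken over admissible trajectories whose improper integral
`lim_{T→∞} ∫_t^T` exists. -/
noncomputable def valueFun (L : ℝ → E → E → ℝ) (Γ : ℝ → E → Set E) (t : ℝ) (ξ : E) : ℝ :=
  sInf {r : ℝ | ∃ a : Arc E, Admissible Γ t ξ a ∧
    Tendsto (fun T : ℝ => ∫ s in t..T, L s (a.x s) (a.dx s)) atTop (𝓝 r)}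

/-- `a` is an optimal trajectory for the problem starting at time `0` from `ξ0`:
it is admissible and `∫_0^∞ L(s,a(s),ȧ(s))ds = V(0,ξ0)` (a finite real number). -/
def OptimalFrom (L : ℝ → E → E → ℝ) (Γ : ℝ → E → Set E) (ξ0 : E) (a : Arc E) : Prop :=
  Admissible Γ 0 ξ0 a ∧
  Tendsto (fun T : ℝ => ∫ s in (0:ℝ)..T, L s (a.x s) (a.dx s)) atTop
    (𝓝 (valueFun L Γ 0 ξ0))

/-- Local absolute continuity of a function on `ℝ₊`. -/
def LocAbsCont {F : Type*} [NormedAddCommGroup F] (p : ℝ → F) : Prop :=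
  ∀ τ : ℝ, 0 < τ → ∀ ε : ℝ, 0 < ε → ∃ δ > (0:ℝ), ∀ n : ℕ, ∀ t s : Fin n → ℝ,
    (∀ i, 0 ≤ t i ∧ t i ≤ s i ∧ s i ≤ τ) →
    (∀ i j : Fin n, i < j → s i ≤ t j) →
    (∑ i, (s i - t i)) < δ → (∑ i, ‖p (s i) - p (t i)‖) < ε

/-- `q` is the weak* derivative of `p : ℝ₊ → E*` at `t`. -/
def HasWeakStarDerivAt (p : ℝ → E →L[ℝ] ℝ) (q : E →L[ℝ] ℝ) (t : ℝ) : Prop :=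
  ∀ x : E, Tendsto (fun h : ℝ => (p (t + h) x - p t x) / h) (𝓝[≠] (0:ℝ)) (𝓝 (q x))

open Asymptotics

/-!
Locally absolutely continuous functions have locally bounded variation. The variation function
of `p` is monotone, hence a.e. differentiable, and it dominates `‖p s - p t‖`, so `p` is Lipschitz
at a.e. `t`; for `d` in a countable dense `D ⊆ E`, each real function `⟨p ·, d⟩` has bounded
variation and is a.e. differentiable. Where all of this holds, the difference quotients of `p`
are bounded in `E*` and converge on `D`, hence converge pointwise on `E` to a bounded functional
`ṗ(t)`. The product rule follows from
`⟨p s, x s⟩ - ⟨p t, x t⟩ = ⟨p s - p t, x t⟩ + ⟨p t, x s - x t⟩ + ⟨p s - p t, x s - x t⟩`,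
whose last term is `o(s - t)` because `p` is norm-continuous at `t`.
-/

section Variation

variable {F : Type*} [NormedAddCommGroup F] {p : ℝ → F}

theorem LocAbsCont.exists_eVariationOn_Icc_le_one (hp : LocAbsCont p) {τ : ℝ} (hτ : 0 < τ) :
    ∃ δ > 0, ∀ a b, 0 ≤ a → b ≤ τ → b - a < δ → eVariationOn p (Icc a b) ≤ 1 := by
  obtain ⟨δ, hδ, hp⟩ := hp τ hτ 1 one_pos
  refine ⟨δ, hδ, fun a b ha hb hab => iSup_le fun ⟨n, u, hu, hus⟩ => ?_⟩
  have hsum : ∑ i : Fin n, ‖p (u (i + 1)) - p (u i)‖ < 1 := by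
    refine hp n (fun i => u i) (fun i => u (i + 1))
      (fun i => ⟨ha.trans (hus i).1, hu (Nat.le_succ _), (hus _).2.trans hb⟩)
      (fun i j hij => hu (Nat.succ_le_of_lt hij)) ?_
    rw [Fin.sum_univ_eq_sum_range (fun i => u (i + 1) - u i), Finset.sum_range_sub u n]
    linarith [(hus n).2, (hus 0).1]
  rw [Fin.sum_univ_eq_sum_range (fun i => ‖p (u (i + 1)) - p (u i)‖)] at hsum
  calc ∑ i ∈ Finset.range n, edist (p (u (i + 1))) (p (u i))
      = ENNReal.ofReal (∑ i ∈ Finset.range n, ‖p (u (i + 1)) - p (u i)‖) := by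
        rw [ENNReal.ofReal_sum_of_nonneg fun i _ => norm_nonneg _]
        simp_rw [edist_dist, dist_eq_norm]
    _ ≤ 1 := ENNReal.ofReal_le_one.2 hsum.le

theorem LocAbsCont.locallyBoundedVariationOn (hp : LocAbsCont p) :
    LocallyBoundedVariationOn p (Ici 0) := by
  intro a b _ hb
  obtain ⟨δ, hδ, hsmall⟩ := hp.exists_eVariationOn_Icc_le_one (show (0 : ℝ) < b + 1 by
    linarith [mem_Ici.1 hb])
  -- chop `[0, c]` into pieces of length `δ / 2`
  have hchain : ∀ n : ℕ, ∀ c, 0 ≤ c → c ≤ b + 1 → c < n * (δ / 2) →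
      eVariationOn p (Icc 0 c) ≤ n := by
    intro n
    induction n with
    | zero => intro c hc _ hcn; simp only [Nat.cast_zero, zero_mul] at hcn; linarith
    | succ n ih =>
      intro c hc hcb hcn
      rcases lt_or_ge c (δ / 2) with hcδ | hcδ
      · exact (hsmall 0 c le_rfl hcb (by linarith)).trans (by simp)
      · have hsplit := eVariationOn.Icc_add_Icc p (s := univ) (by linarith : 0 ≤ c - δ / 2)
          (by linarith : c - δ / 2 ≤ c) (mem_univ _)
        simp only [univ_inter] at hsplit
        rw [← hsplit, Nat.cast_succ]
        push_cast at hcn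
        exact add_le_add (ih _ (by linarith) (by linarith) (by linarith))
          (hsmall _ c (by linarith) hcb (by linarith))
  obtain ⟨n, hn⟩ := exists_nat_gt (b / (δ / 2))
  have hsub : Ici 0 ∩ Icc a b ⊆ Icc 0 b := fun _ hx => ⟨hx.1, hx.2.2⟩
  refine ne_top_of_le_ne_top (ENNReal.natCast_ne_top n) ((eVariationOn.mono p hsub).trans
    (hchain n b (mem_Ici.1 hb) (by linarith) ((div_lt_iff₀ (by positivity)).1 hn)))

end Variation

theorem LocallyBoundedVariationOn.dist_le_abs_variationOnFromTo {α F : Type*} [LinearOrder α]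
    [PseudoMetricSpace F] {f : α → F} {s : Set α} (hf : LocallyBoundedVariationOn f s)
    {a b : α} (ha : a ∈ s) (hb : b ∈ s) : dist (f a) (f b) ≤ |variationOnFromTo f s a b| := by
  wlog hab : a ≤ b generalizing a b
  · rw [dist_comm, variationOnFromTo.eq_neg_swap, abs_neg]
    exact this hb ha (le_of_not_ge hab)
  rw [variationOnFromTo.eq_of_le f s hab, abs_of_nonneg ENNReal.toReal_nonneg, dist_edist]
  exact ENNReal.toReal_mono (hf a b ha hb)
    (eVariationOn.edist_le f ⟨ha, le_rfl, hab⟩ ⟨hb, hab, le_rfl⟩)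

namespace LocallyBoundedVariationOn

variable {F : Type*} [NormedAddCommGroup F] {f : ℝ → F} {s : Set ℝ}

theorem isBigO_sub (hf : LocallyBoundedVariationOn f s) {a t : ℝ} (ha : a ∈ s) (hs : s ∈ 𝓝 t)
    (hV : DifferentiableAt ℝ (variationOnFromTo f s a) t) :
    (fun u => f u - f t) =O[𝓝 t] (fun u => u - t) := by
  refine (IsBigO.of_bound' ?_).trans hV.isBigO_sub
  filter_upwards [hs] with u hu
  have ht := mem_of_mem_nhds hs
  rw [← dist_eq_norm, Real.norm_eq_abs, variationOnFromTo.sub_right hf ha hu ht, dist_comm]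
  exact hf.dist_le_abs_variationOnFromTo ht hu

theorem ae_isBigO_sub (hf : LocallyBoundedVariationOn f s) :
    ∀ᵐ t, t ∈ interior s → (fun u => f u - f t) =O[𝓝 t] (fun u => u - t) := by
  rcases s.eq_empty_or_nonempty with rfl | ⟨a, ha⟩
  · simp
  filter_upwards [(variationOnFromTo.monotoneOn hf ha).ae_differentiableWithinAt_of_mem]
    with t hV ht
  have hs := mem_interior_iff_mem_nhds.1 ht
  exact hf.isBigO_sub ha hs ((hV (mem_of_mem_nhds hs)).differentiableAt hs)

theorem ae_differentiableAt_of_mem_interior [NormedSpace ℝ F] [FiniteDimensional ℝ F]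
    (hf : LocallyBoundedVariationOn f s) : ∀ᵐ t, t ∈ interior s → DifferentiableAt ℝ f t := by
  filter_upwards [hf.ae_differentiableWithinAt_of_mem] with t hdiff ht
  have hs := mem_interior_iff_mem_nhds.1 ht
  exact (hdiff (mem_of_mem_nhds hs)).differentiableAt hs

end LocallyBoundedVariationOn

theorem hasWeakStarDerivAt_iff {p : ℝ → E →L[ℝ] ℝ} {q : E →L[ℝ] ℝ} {t : ℝ} :
    HasWeakStarDerivAt p q t ↔ ∀ y, HasDerivAt (fun s => p s y) (q y) t := by
  simp only [HasWeakStarDerivAt, hasDerivAt_iff_tendsto_slope_zero, smul_eq_mul,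
    div_eq_inv_mul]

section WeakStar

variable {F : Type*} [NormedAddCommGroup F] [NormedSpace ℝ F]

theorem exists_tendsto_apply_of_dense [CompleteSpace F] {ι : Type*} {l : Filter ι} [l.NeBot]
    {G : ι → E →L[ℝ] F} (hG : IsBoundedUnder (· ≤ ·) l fun i => ‖G i‖) {D : Set E}
    (hD : Dense D) (hDlim : ∀ d ∈ D, ∃ z, Tendsto (fun i => G i d) l (𝓝 z)) (y : E) :
    ∃ z, Tendsto (fun i => G i y) l (𝓝 z) := by
  obtain ⟨C, hC⟩ := hG
  set M := max C 1
  have hM : 0 < M := lt_max_of_lt_right one_pos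
  have hGM : ∀ᶠ i in l, ∀ v, ‖G i v‖ ≤ M * ‖v‖ :=
    (eventually_map.1 hC).mono fun i hi v => (G i).le_of_opNorm_le (le_max_of_le_left hi) v
  refine cauchy_map_iff_exists_tendsto.1 (cauchy_map_iff.2 ⟨inferInstance, ?_⟩)
  refine Metric.uniformity_basis_dist.tendsto_right_iff.2 fun ε hε => ?_
  obtain ⟨d, hd, hyd⟩ := hD.exists_dist_lt y (div_pos hε (by positivity : 0 < 3 * M))
  obtain ⟨z, hz⟩ := hDlim d hd
  have hnear : ∀ᶠ i in l, dist (G i y) (G i d) < ε / 3 := hGM.mono fun i hi => by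
    rw [dist_eq_norm, ← map_sub]
    calc ‖G i (y - d)‖ ≤ M * ‖y - d‖ := hi _
      _ < M * (ε / (3 * M)) := by rw [← dist_eq_norm]; gcongr
      _ = ε / 3 := by field_simp
  have hcauchy := Metric.uniformity_basis_dist.tendsto_right_iff.1
    (cauchy_map_iff.1 hz.cauchy_map).2 (ε / 3) (by positivity)
  filter_upwards [hcauchy, hnear.prod_inl l, hnear.prod_inr l] with ij hij hi hj
  calc dist (G ij.1 y) (G ij.2 y)
      ≤ dist (G ij.1 y) (G ij.1 d) + dist (G ij.1 d) (G ij.2 d) + dist (G ij.2 d) (G ij.2 y) :=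
        dist_triangle4 _ _ _ _
    _ < ε / 3 + ε / 3 + ε / 3 := by rw [dist_comm (G ij.2 d)]; gcongr
    _ = ε := by ring

theorem isBoundedUnder_norm_slope_of_isBigO {f : ℝ → F} {t : ℝ}
    (hf : (fun s => f s - f t) =O[𝓝 t] (fun s => s - t)) :
    IsBoundedUnder (· ≤ ·) (𝓝[≠] t) fun s => ‖slope f t s‖ := by
  obtain ⟨C, hC⟩ := hf.bound
  refine ⟨C, eventually_map.2 ?_⟩
  filter_upwards [nhdsWithin_le_nhds hC, self_mem_nhdsWithin] with s hs hst
  have hst' : 0 < ‖s - t‖ := norm_pos_iff.2 (sub_ne_zero.2 hst)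
  rw [slope_def_module, norm_smul, norm_inv]
  exact (inv_mul_le_iff₀ hst').2 (by linarith [mul_comm C ‖s - t‖])

theorem exists_hasDerivAt_apply_of_isBigO_of_dense [CompleteSpace F] {p : ℝ → E →L[ℝ] F} {t : ℝ}
    (hp : (fun s => p s - p t) =O[𝓝 t] (fun s => s - t)) {D : Set E} (hD : Dense D)
    (hd : ∀ d ∈ D, DifferentiableAt ℝ (fun s => p s d) t) :
    ∃ q : E →L[ℝ] F, ∀ y, HasDerivAt (fun s => p s y) (q y) t := by
  have hslope : ∀ y, slope (fun s => p s y) t = fun s => slope p t s y := fun y => by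
    ext s; simp only [slope_def_module, smul_apply, sub_apply]
  have hbdd := isBoundedUnder_norm_slope_of_isBigO hp
  choose f hf using exists_tendsto_apply_of_dense hbdd hD fun d hd' =>
    ⟨_, hslope d ▸ hasDerivAt_iff_tendsto_slope.1 (hd d hd').hasDerivAt⟩
  obtain ⟨C, hC⟩ := hbdd
  have hf_mem : f ∈ closure (DFunLike.coe '' Metric.closedBall (0 : E →L[ℝ] F) C) :=
    mem_closure_of_tendsto (tendsto_pi_nhds.2 hf) <| (eventually_map.1 hC).mono fun s hs =>
      mem_image_of_mem _ (mem_closedBall_zero_iff.2 hs)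
  refine ⟨.ofMemClosureImageCoeBounded f Metric.isBounded_closedBall hf_mem, fun y => ?_⟩
  rw [hasDerivAt_iff_tendsto_slope, hslope]
  exact hf y

theorem HasDerivAt.clm_apply_of_continuousAt {p : ℝ → E →L[ℝ] F} {q : E →L[ℝ] F} {x : ℝ → E}
    {x' : E} {t : ℝ} (hp : ContinuousAt p t) (hq : HasDerivAt (fun s => p s (x t)) (q (x t)) t)
    (hx : HasDerivAt x x' t) : HasDerivAt (fun s => p s (x s)) (q (x t) + p t x') t := by
  have hcross : HasDerivAt (fun s => (p s - p t) (x s - x t)) 0 t := by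
    rw [hasDerivAt_iff_isLittleO]
    simp only [sub_self, map_zero, smul_zero, sub_zero]
    have hp0 : (fun s => ‖p s - p t‖) =o[𝓝 t] fun _ => (1 : ℝ) :=
      ((isLittleO_one_iff ℝ).2 (tendsto_sub_nhds_zero_iff.2 hp)).norm_left
    refine (IsBigO.of_bound' (Eventually.of_forall fun s => ?_)).trans_isLittleO
      ((hp0.mul_isBigO hx.isBigO_sub.norm_left).trans_isBigO
        (by simp only [one_mul]; exact isBigO_refl _ _))
    rw [Real.norm_eq_abs, abs_of_nonneg (by positivity)]
    exact (p s - p t).le_opNorm _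
  convert (hq.add ((p t).hasFDerivAt.comp_hasDerivAt t (hx.sub_const (x t)))).add hcross
    using 1
  · ext s; simp only [Pi.add_apply, Function.comp_apply, sub_apply, map_sub]
    abel
  · simp

end WeakStar

theorem duality_product_rule_general
    [TopologicalSpace.SeparableSpace E]
    (p : ℝ → E →L[ℝ] ℝ) (hp : LocAbsCont p) (a : Arc E) :
    ∀ᵐ t ∂(volume.restrict (Ici (0:ℝ))), ∃ q : E →L[ℝ] ℝ,
      HasWeakStarDerivAt p q t ∧
      HasDerivAt (fun s : ℝ => p s (a.x s)) (q (a.x t) + p t (a.dx t)) t := by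
  obtain ⟨D, hD_countable, hD_dense⟩ := TopologicalSpace.exists_countable_dense E
  have hbv := hp.locallyBoundedVariationOn
  have hcoord : ∀ᵐ t, ∀ d ∈ D, t ∈ interior (Ici 0) → DifferentiableAt ℝ (fun s => p s d) t :=
    (ae_ball_iff hD_countable).2 fun d _ =>
      ((ContinuousLinearMap.apply ℝ ℝ d).lipschitz.comp_locallyBoundedVariationOn
        hbv).ae_differentiableAt_of_mem_interior
  rw [Measure.restrict_congr_set Ioi_ae_eq_Ici.symm]
  filter_upwards [ae_restrict_mem measurableSet_Ioi, a.deriv_ae,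
    ae_restrict_of_ae hbv.ae_isBigO_sub, ae_restrict_of_ae hcoord] with t ht hx hlip hd
  rw [interior_Ici] at hlip hd
  obtain ⟨q, hq⟩ :=
    exists_hasDerivAt_apply_of_isBigO_of_dense (hlip ht) hD_dense fun d hd' => hd d hd' ht
  have hcont : ContinuousAt p t := tendsto_sub_nhds_zero_iff.1
    ((hlip ht).trans_tendsto (tendsto_sub_nhds_zero_iff.2 tendsto_id))
  exact ⟨q, hasWeakStarDerivAt_iff.2 hq, (hq _).clm_apply_of_continuousAt hcont hx⟩

/-- Lemma 3 (product rule): for a locally absolutely continuous `p : ℝ₊ → E*` and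
an arc `x ∈ W^{1,1}_loc(ℝ₊,E)`, one has
`(d/dt)⟨p(t),x(t)⟩ = ⟨ṗ(t),x(t)⟩ + ⟨p(t),ẋ(t)⟩` a.e., where `ṗ` is the weak*
derivative of `p` (existing a.e.). -/
theorem duality_product_rule
    [CompleteSpace E] [TopologicalSpace.SeparableSpace E]
    (p : ℝ → E →L[ℝ] ℝ) (hp : LocAbsCont p) (a : Arc E) :
    ∀ᵐ t ∂(volume.restrict (Ici (0:ℝ))), ∃ q : E →L[ℝ] ℝ,
      HasWeakStarDerivAt p q t ∧
      HasDerivAt (fun s : ℝ => p s (a.x s)) (q (a.x t) + p t (a.dx t)) t :=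
  duality_product_rule_general p hp a
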